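/- arXiv:2504.02977 — 2 statements merged into one kernel-verified Lean document; each statement's English description precedes it below -/
import Mathlib

section
/- Let Y be an m×n zero-nonzero pattern and let (V_1, V_2) be a partition of a finite simple graph G according to Y. If there exists an optimal zero forcing set F for G (i.e., one of size Z(G)) that forces from V_1 to V_2, then Z(G) = m + n − tri(Y). -/
/-!  Common definitions: zero forcing (standard, loop, positive semidefinite),
zero-nonzero patterns, triangles, and related graph parameters. -/

variable {V : Type*}

/-- Standard zero forcing rule: with filled set `S`, the filled vertex `v` can force
its unique unfilled neighbor `u`. -/
def StdForce (G : SimpleGraph V) (S : Set V) (v u : V) : Prop :=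
  v ∈ S ∧ u ∉ S ∧ G.Adj v u ∧ ∀ w, G.Adj v w → w ∉ S → w = u

/-- Adjacency in the looping of `G` with loops at the vertices in `L`
(a vertex counts as its own neighbor iff it has a loop). -/
def LoopAdj (G : SimpleGraph V) (L : Set V) (v w : V) : Prop :=
  G.Adj v w ∨ (v = w ∧ v ∈ L)

/-- Loop zero forcing rule (the forcing vertex need not be filled): `v` can force `u`
if `u` is the only unfilled neighbor of `v` in the looping. -/
def LoopForce (G : SimpleGraph V) (L : Set V) (S : Set V) (v u : V) : Prop :=
  u ∉ S ∧ LoopAdj G L v u ∧ ∀ w, LoopAdj G L v w → w ∉ S → w = u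

/-- Positive semidefinite zero forcing rule: the filled vertex `v` can force the unfilled
vertex `u` if `u` is the only neighbor of `v` in the connected component of `u` of the
subgraph induced by the unfilled vertices. -/
def PsdForce (G : SimpleGraph V) (S : Set V) (v u : V) : Prop :=
  v ∈ S ∧ u ∉ S ∧ G.Adj v u ∧
    ∀ w, G.Adj v w → w ∉ S →
      Relation.ReflTransGen (fun a b => G.Adj a b ∧ a ∉ S ∧ b ∉ S) u w → w = u

/-- The vertices performing a force in a forcing sequence. -/
def sourcesOf (seq : List (V × V)) : Set V := {v | ∃ p ∈ seq, p.1 = v}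

/-- The vertices that get forced in a forcing sequence. -/
def targetsOf (seq : List (V × V)) : Set V := {u | ∃ p ∈ seq, p.2 = u}

/-- The filled set after performing all forces of `seq` starting from `F`. -/
def filledAfter (F : Set V) (seq : List (V × V)) : Set V := F ∪ targetsOf seq

/-- `ValidSeq rule seq F`: starting with `F` as the filled set, the sequence of forces
`seq` is permitted (each force in turn is allowed by `rule`, and each vertex forces
at most once). -/
def ValidSeq (rule : Set V → V → V → Prop) : List (V × V) → Set V → Prop
  | [], _ => True
  | (v, u) :: rest, F => rule F v u ∧ (∀ p ∈ rest, p.1 ≠ v) ∧ ValidSeq rule rest (insert u F)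

/-- `F` is a zero forcing set w.r.t. the forcing rule `rule`. -/
def IsZFSet (rule : Set V → V → V → Prop) (F : Set V) : Prop :=
  ∃ seq : List (V × V), ValidSeq rule seq F ∧ filledAfter F seq = Set.univ

/-- `F` is a zero forcing set (w.r.t. `rule`) from which `R` can be the set of vertices
that force: some (automatically complete) forcing sequence from `F` fills every vertex
and the set of vertices performing a force is exactly `R`. -/
def ForcesWith (rule : Set V → V → V → Prop) (F R : Set V) : Prop :=
  ∃ seq : List (V × V), ValidSeq rule seq F ∧ filledAfter F seq = Set.univ ∧
    sourcesOf seq = R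

/-- The zero forcing number w.r.t. a forcing rule. -/
noncomputable def Znum (rule : Set V → V → V → Prop) : ℕ :=
  sInf {n | ∃ F : Set V, IsZFSet rule F ∧ F.ncard = n}

/-- The (standard) zero forcing number `Z(G)`. -/
noncomputable def Z (G : SimpleGraph V) : ℕ := Znum (StdForce G)

/-- The zero forcing number of the looping of `G` with loops at `L`. -/
noncomputable def Zloop (G : SimpleGraph V) (L : Set V) : ℕ := Znum (LoopForce G L)

/-- The positive semidefinite zero forcing number `Z₊(G)`. -/
noncomputable def Zplus (G : SimpleGraph V) : ℕ := Znum (PsdForce G)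

/-- The enhanced zero forcing number `Ẑ(G)`: the maximum over all loopings of `G` of the
zero forcing number of the looping. -/
noncomputable def Zhat (G : SimpleGraph V) : ℕ := sSup {n | ∃ L : Set V, Zloop G L = n}

/-- `F` is a direct zero forcing set for `G`: some forcing sequence from `F` fills every
vertex and every vertex that performs a force belongs to `F`. -/
def IsDirectZFSet (G : SimpleGraph V) (F : Set V) : Prop :=
  ∃ seq : List (V × V), ValidSeq (StdForce G) seq F ∧ filledAfter F seq = Set.univ ∧
    sourcesOf seq ⊆ F

/-- The direct zero forcing number `Z_d(G)`. -/
noncomputable def Zd (G : SimpleGraph V) : ℕ :=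
  sInf {n | ∃ F : Set V, IsDirectZFSet G F ∧ F.ncard = n}

/-- A zero-nonzero pattern `Y` (entry `Y i j` means the `(i,j)` entry is `*`)
has a `k × k` submatrix that is a triangle. -/
def HasTriOfSize {ρ γ : Type*} (Y : ρ → γ → Prop) (k : ℕ) : Prop :=
  ∃ (r : Fin k → ρ) (c : Fin k → γ), Function.Injective r ∧ Function.Injective c ∧
    (∀ i, Y (r i) (c i)) ∧ ∀ i j : Fin k, i < j → ¬ Y (r i) (c j)

/-- The triangle number `tri(Y)` of a zero-nonzero pattern. -/
noncomputable def tri {ρ γ : Type*} (Y : ρ → γ → Prop) : ℕ := sSup {k | HasTriOfSize Y k}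

/-- Membership in `S_znz(G)`: off the diagonal, the pattern matches the adjacency of `G`. -/
def InSznz (G : SimpleGraph V) (A : V → V → Prop) : Prop :=
  ∀ i j : V, i ≠ j → (A i j ↔ G.Adj i j)

/-- The zero-nonzero pattern of the looping of `G` with loops at `L`. -/
def loopPattern (G : SimpleGraph V) (L : Set V) : V → V → Prop :=
  fun i j => (i = j ∧ i ∈ L) ∨ (i ≠ j ∧ G.Adj i j)

/-- The submatrix of the pattern `Y` with rows `R` and columns `C` is a triangle:
there are enumerations of `R` and `C` realizing a lower-triangular pattern with `*`
diagonal (in particular `|R| = |C|`). -/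
def SubIsTriangle {ρ γ : Type*} (Y : ρ → γ → Prop) (R : Finset ρ) (C : Finset γ) : Prop :=
  ∃ (k : ℕ) (r : Fin k → ρ) (c : Fin k → γ),
    Function.Injective r ∧ Function.Injective c ∧
    (∀ x : ρ, x ∈ R ↔ ∃ i, r i = x) ∧ (∀ y : γ, y ∈ C ↔ ∃ i, c i = y) ∧
    (∀ i, Y (r i) (c i)) ∧ ∀ i j : Fin k, i < j → ¬ Y (r i) (c j)

/-- `(R, C)` is a persistent triangle of `G`. -/
def PersistentTriangle (G : SimpleGraph V) (R C : Finset V) : Prop :=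
  ∀ A : V → V → Prop, InSznz G A → SubIsTriangle A R C

/-- `F` is a direct zero forcing set for `G` from which `R` can be the set of vertices
that force. -/
def DirectForcesWith (G : SimpleGraph V) (F R : Set V) : Prop :=
  ∃ seq : List (V × V), ValidSeq (StdForce G) seq F ∧ filledAfter F seq = Set.univ ∧
    sourcesOf seq = R ∧ R ⊆ F

/-- `(range r, range c)` is a partition of `G` according to the `m × n` pattern `Y`,
with labelings given by `r` and `c`. -/
def PartitionAccording (G : SimpleGraph V) {m n : ℕ} (Y : Fin m → Fin n → Prop)
    (r : Fin m → V) (c : Fin n → V) : Prop :=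
  Function.Injective r ∧ Function.Injective c ∧ (∀ i j, r i ≠ c j) ∧
    (∀ v : V, (∃ i, r i = v) ∨ (∃ j, c j = v)) ∧
    ∀ i j, G.Adj (r i) (c j) ↔ Y i j

/-- `F` is a zero forcing set for `G` that forces from `V1` to `V2`. -/
def ForcesFromTo (G : SimpleGraph V) (F V1 V2 : Set V) : Prop :=
  V1 ⊆ F ∧ ∃ seq : List (V × V), ValidSeq (StdForce G) seq F ∧
    filledAfter F seq = Set.univ ∧ sourcesOf seq ⊆ V1 ∧ targetsOf seq ⊆ V2

/-- `(V1, V2)` is a partition of the vertex set of `G` into two cliques. -/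
def IsCliquePartition (G : SimpleGraph V) (V1 V2 : Set V) : Prop :=
  Disjoint V1 V2 ∧ V1 ∪ V2 = Set.univ ∧ G.IsClique V1 ∧ G.IsClique V2

/-- `G` is cobipartite. -/
def Cobipartite (G : SimpleGraph V) : Prop := ∃ V1 V2 : Set V, IsCliquePartition G V1 V2

/-- `G` is the cobipartite graph associated with the pattern `Y`, via labelings `r`, `c`. -/
def CobipAssociated (G : SimpleGraph V) {m n : ℕ} (Y : Fin m → Fin n → Prop)
    (r : Fin m → V) (c : Fin n → V) : Prop :=
  PartitionAccording G Y r c ∧ G.IsClique (Set.range r) ∧ G.IsClique (Set.range c)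

/-- `z` is a critical vertex: some optimal forcing sequence neither lets `z` force
nor forces `z`. -/
def Critical (G : SimpleGraph V) (z : V) : Prop :=
  ∃ (F : Set V) (seq : List (V × V)), F.ncard = Z G ∧ ValidSeq (StdForce G) seq F ∧
    filledAfter F seq = Set.univ ∧ z ∉ sourcesOf seq ∧ z ∉ targetsOf seq

/-- `z` is an uncritical vertex: in every optimal forcing sequence, exactly one of the
following holds: `z` performs a force, or `z` gets forced. -/
def Uncritical (G : SimpleGraph V) (z : V) : Prop :=
  ∀ (F : Set V) (seq : List (V × V)), F.ncard = Z G → ValidSeq (StdForce G) seq F →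
    filledAfter F seq = Set.univ → (z ∈ sourcesOf seq ↔ z ∉ targetsOf seq)

/-- The maximum nullity `M(G)` over the field `𝔽`. -/
noncomputable def Mnum (𝔽 : Type*) [Field 𝔽] [Fintype V] [DecidableEq V]
    (G : SimpleGraph V) : ℕ :=
  sSup {k | ∃ A : Matrix V V 𝔽, A.IsSymm ∧ (∀ i j : V, i ≠ j → (A i j ≠ 0 ↔ G.Adj i j)) ∧
    k = Fintype.card V - A.rank}

/-- The minimum rank `mr_𝔽(Y)` of a zero-nonzero pattern over the field `𝔽`. -/
noncomputable def mr (𝔽 : Type*) [Field 𝔽] {m n : ℕ} (Y : Fin m → Fin n → Prop) : ℕ :=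
  sInf {k | ∃ A : Matrix (Fin m) (Fin n) 𝔽, (∀ i j, A i j ≠ 0 ↔ Y i j) ∧ A.rank = k}

/-- `G` is a `k`-tree: there is a construction ordering of the vertices in which the
first `k+1` vertices form a clique and every later vertex is adjacent among the earlier
vertices to exactly a `k`-clique. -/
def IsKTree (k : ℕ) [Fintype V] (G : SimpleGraph V) : Prop :=
  k + 1 ≤ Fintype.card V ∧ ∃ ord : V ≃ Fin (Fintype.card V),
    (∀ u v : V, (ord u : ℕ) < k + 1 → (ord v : ℕ) < k + 1 → u ≠ v → G.Adj u v) ∧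
    ∀ v : V, k + 1 ≤ (ord v : ℕ) →
      G.IsClique {u : V | (ord u : ℕ) < (ord v : ℕ) ∧ G.Adj u v} ∧
      {u : V | (ord u : ℕ) < (ord v : ℕ) ∧ G.Adj u v}.ncard = k

/-! Listing an optimal forcing sequence from `V₁` to `V₂` as pairs `(vᵢ, uᵢ)` (`vᵢ` forces `uᵢ`)
gives a triangle of `Y`: `vᵢ ~ uᵢ`, and `vᵢ ≁ uⱼ` for `i < j`, since `uⱼ` is still unfilled when
`vᵢ` forces, so `Z(G) = m + n - |seq| ≥ m + n - tri(Y)`. Conversely the rows and columns of any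
triangle of `Y`, read in order, form a forcing sequence from the complement of its columns, so
`Z(G) ≤ m + n - tri(Y)`. -/

open Function

section TriangularList

variable {ρ γ ρ' γ' : Type*}

/-- The pairs of `l` are the diagonal of a triangle of `Y` (rows and columns in the order of `l`). -/
def IsTriangularList (Y : ρ → γ → Prop) (l : List (ρ × γ)) : Prop :=
  (l.map Prod.fst).Nodup ∧ (l.map Prod.snd).Nodup ∧ (∀ p ∈ l, Y p.1 p.2) ∧
    l.Pairwise fun p q => ¬ Y p.1 q.2

theorem isTriangularList_ofFn_iff (Y : ρ → γ → Prop) {k : ℕ} (f : Fin k → ρ × γ) :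
    IsTriangularList Y (List.ofFn f) ↔ Injective (Prod.fst ∘ f) ∧ Injective (Prod.snd ∘ f) ∧
      (∀ i, Y (f i).1 (f i).2) ∧ ∀ i j, i < j → ¬ Y (f i).1 (f j).2 := by
  simp only [IsTriangularList, List.map_ofFn, List.nodup_ofFn, List.forall_mem_ofFn_iff,
    List.pairwise_ofFn]

theorem hasTriOfSize_iff_exists_isTriangularList (Y : ρ → γ → Prop) (k : ℕ) :
    HasTriOfSize Y k ↔ ∃ l, IsTriangularList Y l ∧ l.length = k := by
  constructor
  · rintro ⟨r, c, hr, hc, hdiag, hzero⟩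
    exact ⟨List.ofFn fun i => (r i, c i),
      (isTriangularList_ofFn_iff Y _).2 ⟨hr, hc, hdiag, hzero⟩, List.length_ofFn⟩
  · rintro ⟨l, hl, rfl⟩
    rw [← List.ofFn_get l, isTriangularList_ofFn_iff] at hl
    obtain ⟨hr, hc, hdiag, hzero⟩ := hl
    exact ⟨_, _, hr, hc, hdiag, hzero⟩

theorem isTriangularList_map_iff {Y : ρ → γ → Prop} {Y' : ρ' → γ' → Prop} {f : ρ → ρ'}
    {g : γ → γ'} (hf : Injective f) (hg : Injective g) (hY : ∀ a b, Y' (f a) (g b) ↔ Y a b)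
    (l : List (ρ × γ)) :
    IsTriangularList Y' (l.map (Prod.map f g)) ↔ IsTriangularList Y l := by
  rw [IsTriangularList, IsTriangularList, List.map_map, Prod.map_fst', ← List.map_map,
    List.nodup_map_iff hf, List.map_map, Prod.map_snd', ← List.map_map, List.nodup_map_iff hg]
  simp only [List.forall_mem_map, List.pairwise_map, Prod.map_fst, Prod.map_snd, hY]

end TriangularList

section Forcing

variable {G : SimpleGraph V}

@[simp]
theorem sourcesOf_cons (p : V × V) (l : List (V × V)) :
    sourcesOf (p :: l) = insert p.1 (sourcesOf l) := by
  ext v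
  simp [sourcesOf, eq_comm]

@[simp]
theorem targetsOf_cons (p : V × V) (l : List (V × V)) :
    targetsOf (p :: l) = insert p.2 (targetsOf l) := by
  ext u
  simp [targetsOf, eq_comm]

theorem targetsOf_eq_coe_toFinset [DecidableEq V] (l : List (V × V)) :
    targetsOf l = ↑(l.map Prod.snd).toFinset := by
  ext u
  simp [targetsOf]

theorem ncard_targetsOf {l : List (V × V)} (hl : (l.map Prod.snd).Nodup) :
    (targetsOf l).ncard = l.length := by
  classical
  rw [targetsOf_eq_coe_toFinset, Set.ncard_coe_finset, List.toFinset_card_of_nodup hl,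
    List.length_map]

theorem ValidSeq.disjoint_targetsOf {seq : List (V × V)} {F : Set V}
    (h : ValidSeq (StdForce G) seq F) : Disjoint F (targetsOf seq) := by
  induction seq generalizing F with
  | nil => simp [targetsOf]
  | cons p rest ih =>
    obtain ⟨v, u⟩ := p
    obtain ⟨hforce, -, hrest⟩ := h
    rw [targetsOf_cons, Set.disjoint_insert_right]
    exact ⟨hforce.2.1, (ih hrest).mono_left (Set.subset_insert u F)⟩

/-- Each force `v → u` leaves `u` the only unfilled neighbour of `v`; every later target is
still unfilled at that time, so it is not adjacent to `v`. -/
theorem ValidSeq.isTriangularList {seq : List (V × V)} {F : Set V}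
    (h : ValidSeq (StdForce G) seq F) : IsTriangularList G.Adj seq := by
  induction seq generalizing F with
  | nil => simp [IsTriangularList]
  | cons p rest ih =>
    obtain ⟨v, u⟩ := p
    obtain ⟨hforce, hfresh, hrest⟩ := h
    obtain ⟨hfst, hsnd, hadj, hpw⟩ := ih hrest
    have hunfilled : ∀ q ∈ rest, q.2 ∉ insert u F := fun q hq hq' =>
      Set.disjoint_left.1 hrest.disjoint_targetsOf hq' ⟨q, hq, rfl⟩
    refine ⟨List.nodup_cons.2 ⟨fun hv => ?_, hfst⟩, List.nodup_cons.2 ⟨fun hu => ?_, hsnd⟩,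
      List.forall_mem_cons.2 ⟨hforce.2.2.1, hadj⟩, List.pairwise_cons.2 ⟨fun q hq hvq => ?_, hpw⟩⟩
    · obtain ⟨q, hq, rfl⟩ := List.mem_map.1 hv
      exact hfresh q hq rfl
    · obtain ⟨q, hq, rfl⟩ := List.mem_map.1 hu
      exact hunfilled q hq (Set.mem_insert _ F)
    · have hqF : q.2 ∉ F := fun hqF => hunfilled q hq (Set.mem_insert_of_mem u hqF)
      have hqu : q.2 = u := hforce.2.2.2 q.2 hvq hqF
      exact hunfilled q hq (hqu ▸ Set.mem_insert u F)

/-- Conversely, a triangular list is a forcing sequence from the complement of its targets: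
when `v` forces, the unfilled vertices are `u` and the later targets, none adjacent to `v`. -/
theorem validSeq_compl_targetsOf {seq : List (V × V)} (hl : IsTriangularList G.Adj seq)
    (hst : Disjoint (sourcesOf seq) (targetsOf seq)) :
    ValidSeq (StdForce G) seq (targetsOf seq)ᶜ := by
  induction seq with
  | nil => trivial
  | cons p rest ih =>
    obtain ⟨v, u⟩ := p
    obtain ⟨hfst, hsnd, hadj, hpw⟩ := hl
    rw [List.map_cons, List.nodup_cons] at hfst hsnd
    rw [List.forall_mem_cons] at hadj
    rw [List.pairwise_cons] at hpw
    rw [sourcesOf_cons, targetsOf_cons, Set.disjoint_insert_left] at hst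
    have hu : u ∉ targetsOf rest := fun ⟨q, hq, hqu⟩ => hsnd.1 (List.mem_map.2 ⟨q, hq, hqu⟩)
    refine ⟨⟨?_, ?_, hadj.1, ?_⟩, ?_, ?_⟩
    · simpa using hst.1
    · simp
    · intro w hvw hw
      rw [targetsOf_cons, Set.notMem_compl_iff, Set.mem_insert_iff] at hw
      refine hw.resolve_right ?_
      rintro ⟨q, hq, rfl⟩
      exact hpw.1 q hq hvw
    · intro q hq hqv
      exact hfst.1 (List.mem_map.2 ⟨q, hq, hqv⟩)
    · have hcompl : insert u (targetsOf ((v, u) :: rest))ᶜ = (targetsOf rest)ᶜ := by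
        ext w
        rcases eq_or_ne w u with rfl | hwu <;> simp [*]
      rw [hcompl]
      exact ih ⟨hfst.2, hsnd.2, hadj.2, hpw.2⟩
        (hst.2.mono_right (Set.subset_insert u _))

theorem ValidSeq.ncard_add_length [Finite V] {seq : List (V × V)} {F : Set V}
    (h : ValidSeq (StdForce G) seq F) (hfill : filledAfter F seq = Set.univ) :
    F.ncard + seq.length = Nat.card V := by
  rw [← ncard_targetsOf h.isTriangularList.2.1, ← Set.ncard_union_eq h.disjoint_targetsOf,
    ← filledAfter, hfill, Set.ncard_univ]

theorem Z_add_length_le [Finite V] {seq : List (V × V)} (hl : IsTriangularList G.Adj seq)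
    (hst : Disjoint (sourcesOf seq) (targetsOf seq)) : Z G + seq.length ≤ Nat.card V := by
  have hZF : IsZFSet (StdForce G) (targetsOf seq)ᶜ :=
    ⟨seq, validSeq_compl_targetsOf hl hst, Set.compl_union_self _⟩
  have hZ : Z G ≤ (targetsOf seq)ᶜ.ncard := Nat.sInf_le ⟨_, hZF, rfl⟩
  have hcard := Set.ncard_add_ncard_compl (targetsOf seq)
  rw [ncard_targetsOf hl.2.1] at hcard
  omega

end Forcing

namespace PartitionAccording

variable {G : SimpleGraph V} {m n : ℕ} {Y : Fin m → Fin n → Prop}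
  {r : Fin m → V} {c : Fin n → V}

noncomputable def equivSum (hpart : PartitionAccording G Y r c) : Fin m ⊕ Fin n ≃ V :=
  Equiv.ofBijective (Sum.elim r c) <| by
    obtain ⟨hr, hc, hrc, hcover, -⟩ := hpart
    refine ⟨?_, fun v => (hcover v).elim (fun ⟨i, hi⟩ => ⟨.inl i, hi⟩)
      fun ⟨j, hj⟩ => ⟨.inr j, hj⟩⟩
    rintro (i | j) (i' | j') h
    · exact congrArg _ (hr h)
    · exact (hrc i j' h).elim
    · exact (hrc i' j h.symm).elim
    · exact congrArg _ (hc h)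

theorem finite (hpart : PartitionAccording G Y r c) : Finite V :=
  .of_equiv _ hpart.equivSum

theorem card_eq (hpart : PartitionAccording G Y r c) : Nat.card V = m + n := by
  rw [← Nat.card_congr hpart.equivSum, Nat.card_sum, Nat.card_fin, Nat.card_fin]

theorem hasTriOfSize_length (hpart : PartitionAccording G Y r c) {seq : List (V × V)}
    (hl : IsTriangularList G.Adj seq) (hsrc : sourcesOf seq ⊆ Set.range r)
    (htgt : targetsOf seq ⊆ Set.range c) : HasTriOfSize Y seq.length := by
  obtain ⟨l, rfl⟩ : seq ∈ Set.range (List.map (Prod.map r c)) := by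
    rw [Set.range_list_map, Set.range_prodMap]
    exact fun p hp => ⟨hsrc ⟨p, hp, rfl⟩, htgt ⟨p, hp, rfl⟩⟩
  rw [isTriangularList_map_iff hpart.1 hpart.2.1 hpart.2.2.2.2] at hl
  exact (hasTriOfSize_iff_exists_isTriangularList Y _).2 ⟨l, hl, (List.length_map _).symm⟩

theorem Z_add_le_of_hasTriOfSize (hpart : PartitionAccording G Y r c) {k : ℕ}
    (hk : HasTriOfSize Y k) : Z G + k ≤ m + n := by
  obtain ⟨l, hl, rfl⟩ := (hasTriOfSize_iff_exists_isTriangularList Y k).1 hk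
  have := hpart.finite
  have hst : Disjoint (sourcesOf (l.map (Prod.map r c))) (targetsOf (l.map (Prod.map r c))) := by
    refine Set.disjoint_left.2 ?_
    rintro _ ⟨p, hp, rfl⟩ ⟨q, hq, hpq⟩
    obtain ⟨a, -, rfl⟩ := List.mem_map.1 hp
    obtain ⟨b, -, rfl⟩ := List.mem_map.1 hq
    exact hpart.2.2.1 a.1 b.2 hpq.symm
  have h := Z_add_length_le ((isTriangularList_map_iff hpart.1 hpart.2.1 hpart.2.2.2.2 l).2 hl) hst
  rwa [List.length_map, hpart.card_eq] at h

end PartitionAccording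

theorem Z_eq_of_optimal_forces_from_to_general
    {V : Type*} {m n : ℕ} (Y : Fin m → Fin n → Prop)
    (G : SimpleGraph V) (r : Fin m → V) (c : Fin n → V)
    (hpart : PartitionAccording G Y r c)
    (hopt : ∃ F : Set V, F.ncard = Z G ∧ ForcesFromTo G F (Set.range r) (Set.range c)) :
    Z G = m + n - tri Y := by
  obtain ⟨F, hF, -, seq, hvalid, hfill, hsrc, htgt⟩ := hopt
  have := hpart.finite
  have hcard : Z G + seq.length = m + n := by
    rw [← hF, ← hpart.card_eq, hvalid.ncard_add_length hfill]
  have htri : tri Y = seq.length :=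
    IsGreatest.csSup_eq ⟨hpart.hasTriOfSize_length hvalid.isTriangularList hsrc htgt,
      fun k hk => by have := hpart.Z_add_le_of_hasTriOfSize hk; omega⟩
  omega

/-- If `(V₁, V₂)` is a partition of `G` according to `Y` and some
optimal zero forcing set for `G` forces from `V₁` to `V₂`, then
`Z(G) = m + n − tri(Y)`. -/
theorem Z_eq_of_optimal_forces_from_to
    {V : Type*} [Fintype V] [DecidableEq V] {m n : ℕ} (Y : Fin m → Fin n → Prop)
    (G : SimpleGraph V) (r : Fin m → V) (c : Fin n → V)
    (hpart : PartitionAccording G Y r c)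
    (hopt : ∃ F : Set V, F.ncard = Z G ∧ ForcesFromTo G F (Set.range r) (Set.range c)) :
    Z G = m + n - tri Y :=
  Z_eq_of_optimal_forces_from_to_general Y G r c hpart hopt
end

section
/- Let 𝔽 be a field, let Y be an m×n zero-nonzero pattern, and let G be the cobipartite graph associated with Y, and suppose G is saturated with respect to the corresponding clique partition. If M(G) = Z(G) over 𝔽, then mr_𝔽(Y) = tri(Y). -/
/-!  Common definitions: zero forcing (standard, loop, positive semidefinite),
zero-nonzero patterns, triangles, and related graph parameters. -/

variable {V : Type*}

/-! A forcing sequence `v₁ → u₁, …, v_k → u_k` is a triangle of `G`: when `v_s` forces, a later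
target `u_t` is still unfilled, so it is neither `v_s` nor a neighbour of `v_s`. In a cobipartite
graph two distinct vertices of the same clique are adjacent, so `v_s` and `u_t` (`s < t`) lie in
different cliques. Hence, up to exchanging the cliques, every force but the last starts among the
rows and every force but the first ends among the columns; completing the first and last pair by
saturation turns the sequence into a triangle of `Y` of length `k`, and `|V| - Z(G) ≤ tri(Y)`.
A matrix of `S(G)` of nullity `M(G)` restricts to a realization of `Y`, so
`mr(Y) ≤ |V| - M(G) = |V| - Z(G) ≤ tri(Y)`; conversely every realization of `Y` has a nonsingular
triangular submatrix of order `tri(Y)`. -/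

section Triangle

variable {ρ γ : Type*} {Y : ρ → γ → Prop} {k : ℕ}

theorem hasTriOfSize_of_lowerTriangular (rows : Fin k → ρ) (cols : Fin k → γ)
    (hdiag : ∀ t, Y (rows t) (cols t)) (hupper : ∀ s t, s < t → ¬Y (rows s) (cols t)) :
    HasTriOfSize Y k := by
  refine ⟨rows, cols, fun s t hst => ?_, fun s t hst => ?_, hdiag, hupper⟩
  · by_contra hne
    rcases lt_or_gt_of_ne hne with h | h
    · exact hupper s t h (hst ▸ hdiag t)
    · exact hupper t s h (hst ▸ hdiag s)
  · by_contra hne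
    rcases lt_or_gt_of_ne hne with h | h
    · exact hupper s t h (hst ▸ hdiag s)
    · exact hupper t s h (hst ▸ hdiag t)

theorem HasTriOfSize.of_flip (h : HasTriOfSize (fun j i => Y i j) k) : HasTriOfSize Y k := by
  obtain ⟨cols, rows, -, -, hdiag, hupper⟩ := h
  exact hasTriOfSize_of_lowerTriangular (fun t => rows t.rev) (fun t => cols t.rev)
    (fun t => hdiag t.rev) fun s t hst => hupper t.rev s.rev (Fin.rev_lt_rev.mpr hst)

theorem HasTriOfSize.le_tri [Fintype ρ] (h : HasTriOfSize Y k) : k ≤ tri Y := by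
  refine le_csSup ⟨Fintype.card ρ, fun j ⟨rows, _, hrows, _⟩ => ?_⟩ h
  simpa using Fintype.card_le_of_injective rows hrows

theorem HasTriOfSize.le_rank {𝔽 : Type*} [Field 𝔽] [Fintype γ] (h : HasTriOfSize Y k)
    {A : Matrix ρ γ 𝔽} (hA : ∀ i j, A i j ≠ 0 ↔ Y i j) : k ≤ A.rank := by
  obtain ⟨rows, cols, -, -, hdiag, hupper⟩ := h
  have hlower : (A.submatrix rows cols).IsLowerTriangular := fun s t hst =>
    not_not.mp fun hne => hupper s t hst ((hA _ _).mp hne)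
  have hdet : (A.submatrix rows cols).det ≠ 0 := by
    rw [Matrix.det_of_isLowerTriangular _ hlower]
    exact Finset.prod_ne_zero_iff.mpr fun t _ => (hA _ _).mpr (hdiag t)
  calc k = (A.submatrix rows cols).rank := by
        rw [Matrix.rank_of_isUnit _ ((Matrix.isUnit_iff_isUnit_det _).mpr hdet.isUnit),
          Fintype.card_fin]
    _ ≤ A.rank := Matrix.rank_submatrix_le _ _ _

end Triangle

theorem tri_le_mr (𝔽 : Type*) [Field 𝔽] {m n : ℕ} (Y : Fin m → Fin n → Prop) :
    tri Y ≤ mr 𝔽 Y := by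
  classical
  refine le_csInf ⟨_, Matrix.of fun i j => if Y i j then (1 : 𝔽) else 0,
    fun i j => by by_cases h : Y i j <;> simp [h], rfl⟩ ?_
  rintro _ ⟨A, hA, rfl⟩
  have htri0 : HasTriOfSize Y 0 :=
    hasTriOfSize_of_lowerTriangular Fin.elim0 Fin.elim0 (fun t => t.elim0) fun s => s.elim0
  exact csSup_le ⟨0, htri0⟩ fun k hk => hk.le_rank hA

theorem mr_le_rank {𝔽 : Type*} [Field 𝔽] {m n : ℕ} {Y : Fin m → Fin n → Prop}
    {A : Matrix (Fin m) (Fin n) 𝔽} (hA : ∀ i j, A i j ≠ 0 ↔ Y i j) : mr 𝔽 Y ≤ A.rank :=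
  Nat.sInf_le ⟨A, hA, rfl⟩

theorem exists_rank_eq_card_sub_Mnum (𝔽 : Type*) [Field 𝔽] [Fintype V] [DecidableEq V]
    (G : SimpleGraph V) : ∃ A : Matrix V V 𝔽,
      (∀ i j, i ≠ j → (A i j ≠ 0 ↔ G.Adj i j)) ∧ A.rank = Fintype.card V - Mnum 𝔽 G := by
  classical
  have hmem : Mnum 𝔽 G ∈ {k | ∃ A : Matrix V V 𝔽, A.IsSymm ∧
      (∀ i j : V, i ≠ j → (A i j ≠ 0 ↔ G.Adj i j)) ∧ k = Fintype.card V - A.rank} :=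
    Nat.sSup_mem ⟨_, G.adjMatrix 𝔽, G.isSymm_adjMatrix, fun i j _ => by simp, rfl⟩
      ⟨Fintype.card V, by rintro _ ⟨A, -, -, rfl⟩; exact Nat.sub_le _ _⟩
  obtain ⟨A, -, hA, hM⟩ := hmem
  have := A.rank_le_card_width
  exact ⟨A, hA, by omega⟩

section Forcing

variable {G : SimpleGraph V}

theorem ValidSeq.snd_notMem :
    ∀ {l : List (V × V)} {F : Set V}, ValidSeq (StdForce G) l F → ∀ p ∈ l, p.2 ∉ F
  | [], _, _, _, hp => absurd hp List.not_mem_nil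
  | (_, u) :: _, _, ⟨hforce, _, hrest⟩, p, hp => by
    rcases List.mem_cons.mp hp with rfl | hp
    · exact hforce.2.1
    · exact fun hpF => hrest.snd_notMem p hp (Set.mem_insert_of_mem u hpF)

theorem ValidSeq.adj :
    ∀ {l : List (V × V)} {F : Set V}, ValidSeq (StdForce G) l F → ∀ p ∈ l, G.Adj p.1 p.2
  | [], _, _, _, hp => absurd hp List.not_mem_nil
  | _ :: _, _, ⟨hforce, _, hrest⟩, p, hp => by
    rcases List.mem_cons.mp hp with rfl | hp
    · exact hforce.2.2.1
    · exact hrest.adj p hp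

theorem ValidSeq.pairwise_ne_and_not_adj :
    ∀ {l : List (V × V)} {F : Set V}, ValidSeq (StdForce G) l F →
      l.Pairwise fun p q => p.1 ≠ q.2 ∧ ¬G.Adj p.1 q.2
  | [], _, _ => List.Pairwise.nil
  | (_, u) :: _, F, ⟨⟨hvF, _, _, honly⟩, _, hrest⟩ => by
    refine List.Pairwise.cons (fun q hq => ?_) hrest.pairwise_ne_and_not_adj
    have hqF : q.2 ∉ insert u F := hrest.snd_notMem q hq
    refine ⟨fun h => hqF (Set.mem_insert_of_mem u (h ▸ hvF)), fun hadj => hqF ?_⟩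
    rw [honly q.2 hadj fun h => hqF (Set.mem_insert_of_mem u h)]
    exact Set.mem_insert u F

theorem card_le_ncard_add_length [Fintype V] {F : Set V} {seq : List (V × V)}
    (hfill : filledAfter F seq = Set.univ) : Fintype.card V ≤ F.ncard + seq.length := by
  classical
  have htargets : targetsOf seq = ((seq.map Prod.snd).toFinset : Set V) := by
    ext u
    simp [targetsOf, eq_comm]
  calc Fintype.card V = (F ∪ targetsOf seq).ncard := by
        rw [← filledAfter, hfill, Set.ncard_univ, Nat.card_eq_fintype_card]
    _ ≤ F.ncard + (targetsOf seq).ncard := Set.ncard_union_le _ _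
    _ ≤ F.ncard + seq.length := by
        rw [htargets, Set.ncard_coe_finset]
        exact Nat.add_le_add_left ((List.toFinset_card_le _).trans (List.length_map _).le) _

theorem exists_validSeq_ncard_eq_Z (G : SimpleGraph V) : ∃ (F : Set V) (seq : List (V × V)),
    ValidSeq (StdForce G) seq F ∧ filledAfter F seq = Set.univ ∧ F.ncard = Z G := by
  obtain ⟨F, ⟨seq, hval, hfill⟩, hcard⟩ :=
    Nat.sInf_mem (s := {n | ∃ F : Set V, IsZFSet (StdForce G) F ∧ F.ncard = n})
      ⟨_, Set.univ, ⟨[], trivial, Set.univ_union _⟩, rfl⟩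
  exact ⟨F, seq, hval, hfill, hcard⟩

end Forcing

/-- Read `v t → u t` as the `t`-th force of a sequence and `R`, `C` as the two cliques. -/
def Oriented (R C : Set V) {k : ℕ} (v u : Fin k → V) : Prop :=
  (∀ s t, s < t → v s ∈ R ∧ u t ∈ C) ∧ ∀ t, v t ∈ R ∨ u t ∈ C

section Oriented

variable {R C : Set V} {k : ℕ}

theorem oriented_of_last_mem (hcov : ∀ x, x ∈ R ∨ x ∈ C) {v u : Fin (k + 1) → V}
    (hsepR : ∀ s t, s < t → v s ∈ R → u t ∉ R) (hsepC : ∀ s t, s < t → v s ∈ C → u t ∉ C)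
    (hlast : u (Fin.last k) ∈ C) : Oriented R C v u := by
  have hv : ∀ s, s < Fin.last k → v s ∈ R := fun s hs =>
    (hcov (v s)).resolve_right fun hC => hsepC s _ hs hC hlast
  refine ⟨fun s t hst => ?_, fun t => ?_⟩
  · have hvs := hv s (hst.trans_le (Fin.le_last t))
    exact ⟨hvs, (hcov (u t)).resolve_left (hsepR s t hst hvs)⟩
  · rcases (Fin.le_last t).lt_or_eq with ht | rfl
    · exact Or.inl (hv t ht)
    · exact Or.inr hlast

theorem oriented_or_oriented (hcov : ∀ x, x ∈ R ∨ x ∈ C) {v u : Fin k → V}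
    (hsepR : ∀ s t, s < t → v s ∈ R → u t ∉ R) (hsepC : ∀ s t, s < t → v s ∈ C → u t ∉ C) :
    Oriented R C v u ∨ Oriented C R v u := by
  cases k with
  | zero => exact Or.inl ⟨fun s => s.elim0, fun t => t.elim0⟩
  | succ k =>
    rcases hcov (u (Fin.last k)) with hR | hC
    · exact Or.inr (oriented_of_last_mem (fun x => (hcov x).symm) hsepC hsepR hR)
    · exact Or.inl (oriented_of_last_mem hcov hsepR hsepC hC)

end Oriented

theorem hasTriOfSize_of_oriented {ρ γ : Type*} {Y : ρ → γ → Prop} {G : SimpleGraph V}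
    {r : ρ → V} {c : γ → V} (hadj : ∀ i j, G.Adj (r i) (c j) ↔ Y i j)
    (hsat1 : ∀ i, ∃ j, Y i j) (hsat2 : ∀ j, ∃ i, Y i j) {k : ℕ} {v u : Fin k → V}
    (hvu : ∀ t, G.Adj (v t) (u t)) (hsep : ∀ s t, s < t → ¬G.Adj (v s) (u t))
    (hor : Oriented (Set.range r) (Set.range c) v u) : HasTriOfSize Y k := by
  have hpair : ∀ t, ∃ i j, Y i j ∧ (v t ∈ Set.range r → r i = v t) ∧
      (u t ∈ Set.range c → c j = u t) := by
    intro t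
    by_cases hv : v t ∈ Set.range r <;> by_cases hu : u t ∈ Set.range c
    · obtain ⟨i, hi⟩ := hv
      obtain ⟨j, hj⟩ := hu
      exact ⟨i, j, (hadj i j).mp (hi ▸ hj ▸ hvu t), fun _ => hi, fun _ => hj⟩
    · obtain ⟨i, hi⟩ := hv
      obtain ⟨j, hj⟩ := hsat1 i
      exact ⟨i, j, hj, fun _ => hi, fun h => absurd h hu⟩
    · obtain ⟨j, hj⟩ := hu
      obtain ⟨i, hi⟩ := hsat2 j
      exact ⟨i, j, hi, fun h => absurd h hv, fun _ => hj⟩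
    · exact ((hor.2 t).elim hv hu).elim
  choose rows cols hY hrows hcols using hpair
  refine hasTriOfSize_of_lowerTriangular rows cols hY fun s t hst hYst => hsep s t hst ?_
  rw [← hrows s (hor.1 s t hst).1, ← hcols t (hor.1 s t hst).2]
  exact (hadj _ _).mpr hYst

theorem hasTriOfSize_length_of_validSeq {m n : ℕ} {Y : Fin m → Fin n → Prop}
    {G : SimpleGraph V} {r : Fin m → V} {c : Fin n → V} (hassoc : CobipAssociated G Y r c)
    (hsat1 : ∀ i, ∃ j, G.Adj (r i) (c j)) (hsat2 : ∀ j, ∃ i, G.Adj (r i) (c j))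
    {l : List (V × V)} {F : Set V} (hval : ValidSeq (StdForce G) l F) :
    HasTriOfSize Y l.length := by
  obtain ⟨⟨-, -, -, hcov, hadj⟩, hrr, hcc⟩ := hassoc
  set v : Fin l.length → V := fun t => (l.get t).1
  set u : Fin l.length → V := fun t => (l.get t).2
  have hvu : ∀ t, G.Adj (v t) (u t) := fun t => hval.adj _ (List.get_mem l t)
  have hsep : ∀ s t, s < t → v s ≠ u t ∧ ¬G.Adj (v s) (u t) :=
    List.pairwise_iff_get.mp hval.pairwise_ne_and_not_adj
  rcases oriented_or_oriented hcov
      (fun s t hst hs ht => (hsep s t hst).2 (hrr hs ht (hsep s t hst).1))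
      (fun s t hst hs ht => (hsep s t hst).2 (hcc hs ht (hsep s t hst).1)) with hor | hor
  · exact hasTriOfSize_of_oriented hadj (fun i => (hsat1 i).imp fun j => (hadj i j).mp)
      (fun j => (hsat2 j).imp fun i => (hadj i j).mp) hvu (fun s t hst => (hsep s t hst).2) hor
  · exact HasTriOfSize.of_flip (hasTriOfSize_of_oriented (r := c) (c := r)
      (fun j i => G.adj_comm _ _ |>.trans (hadj i j))
      (fun j => (hsat2 j).imp fun i => (hadj i j).mp)
      (fun i => (hsat1 i).imp fun j => (hadj i j).mp) hvu (fun s t hst => (hsep s t hst).2) hor)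

theorem card_sub_Z_le_tri [Fintype V] {m n : ℕ} {Y : Fin m → Fin n → Prop}
    {G : SimpleGraph V} {r : Fin m → V} {c : Fin n → V} (hassoc : CobipAssociated G Y r c)
    (hsat1 : ∀ i, ∃ j, G.Adj (r i) (c j)) (hsat2 : ∀ j, ∃ i, G.Adj (r i) (c j)) :
    Fintype.card V - Z G ≤ tri Y := by
  obtain ⟨F, seq, hval, hfill, hcard⟩ := exists_validSeq_ncard_eq_Z G
  have hcount := card_le_ncard_add_length hfill
  calc Fintype.card V - Z G ≤ seq.length := by omega
    _ ≤ tri Y := (hasTriOfSize_length_of_validSeq hassoc hsat1 hsat2 hval).le_tri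

/-- Over any field `𝔽`, if `G` is the saturated cobipartite graph
associated with `Y` and `M(G) = Z(G)` over `𝔽`, then `mr_𝔽(Y) = tri(Y)`. -/
theorem mr_eq_tri_of_M_eq_Z
    {V : Type*} [Fintype V] [DecidableEq V] (𝔽 : Type*) [Field 𝔽] {m n : ℕ}
    (Y : Fin m → Fin n → Prop) (G : SimpleGraph V) (r : Fin m → V) (c : Fin n → V)
    (hassoc : CobipAssociated G Y r c)
    (hsat1 : ∀ i, ∃ j, G.Adj (r i) (c j)) (hsat2 : ∀ j, ∃ i, G.Adj (r i) (c j))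
    (hMZ : Mnum 𝔽 G = Z G) :
    mr 𝔽 Y = tri Y := by
  obtain ⟨A, hA, hrank⟩ := exists_rank_eq_card_sub_Mnum 𝔽 G
  have hrc : ∀ i j, r i ≠ c j := hassoc.1.2.2.1
  have hadj : ∀ i j, G.Adj (r i) (c j) ↔ Y i j := hassoc.1.2.2.2.2
  have hsub : ∀ i j, A.submatrix r c i j ≠ 0 ↔ Y i j := fun i j =>
    (hA _ _ (hrc i j)).trans (hadj i j)
  refine le_antisymm ?_ (tri_le_mr 𝔽 Y)
  calc mr 𝔽 Y ≤ (A.submatrix r c).rank := mr_le_rank hsub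
    _ ≤ A.rank := Matrix.rank_submatrix_le A r c
    _ = Fintype.card V - Z G := by rw [hrank, hMZ]
    _ ≤ tri Y := card_sub_Z_le_tri hassoc hsat1 hsat2
end
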